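/- arXiv:1704.04544 — 4 statements merged into one kernel-verified Lean document; each statement's English description precedes it below -/
import Mathlib

section
/- Let D0, D1 be division rings over a field k and let M be a k-central D0–D1-bimodule with left dimension n and right dimension m where m ≥ 2. Let {φ_1,…,φ_m} be a right basis of M over D1 and {φ_1*,…,φ_m*} the corresponding left dual basis of the right dual M* = Hom_{D1}(M, D1). If v ∈ M and g ∈ M* are such that v ⊗ g lies in the D0-subbimodule of M ⊗_{D1} M* generated by the canonical element Σ_l φ_l ⊗ φ_l*, then v = 0 or g = 0. -/
/-!
Evaluating the hypothesis at `x = φ_q` collapses the sum to `coord_p(c • φ_q)`, so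
`c • φ_q = v · g(φ_q)` for every `q`: left multiplication by `c` sends `M` into the right line
`v · D1`. If `c ≠ 0` this map is surjective, so `M` would have right dimension at most `1 < m`.
Hence `c = 0`, and then `v · g(φ_q) = 0` for all `q`, i.e. `v = 0` or `g` kills the basis.
-/

open Module Submodule

theorem Module.Basis.eq_op_smul_of_coord_mul_eq_sum {ι R M : Type*} [Fintype ι] [Ring R]
    [AddCommGroup M] [Module Rᵐᵒᵖ M] (b : Basis ι Rᵐᵒᵖ M) {v : M} {g : M →ₗ[Rᵐᵒᵖ] R} {f : ι → M}
    (h : ∀ (p : ι) (x : M),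
      (b.coord p v).unop * g x = ∑ l, (b.coord p (f l)).unop * (b.coord l x).unop)
    (q : ι) : f q = MulOpposite.op (g (b q)) • v := by
  refine b.ext_elem fun p => MulOpposite.unop_injective ?_
  have hp := h p (b q)
  classical
  rw [Finset.sum_eq_single_of_mem q (Finset.mem_univ q) fun l _ hl => by
    simp [Finsupp.single_eq_of_ne hl]] at hp
  simpa using hp.symm

theorem Module.Basis.smul_mem_span_singleton {ι R D M : Type*} [Semiring R] [Monoid D]
    [AddCommMonoid M] [Module R M] [DistribMulAction D M] [SMulCommClass D R M]
    (b : Basis ι R M) {c : D} {v : M} (hv : ∀ i, c • b i ∈ R ∙ v) (x : M) :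
    c • x ∈ R ∙ v := by
  have hx : x ∈ span R (Set.range b) := b.span_eq ▸ mem_top
  induction hx using span_induction with
  | mem _ hy => obtain ⟨i, rfl⟩ := hy; exact hv i
  | zero => simp
  | add _ _ _ _ hy hz => rw [smul_add]; exact add_mem hy hz
  | smul a _ _ hy => rw [smul_comm]; exact smul_mem _ a hy

theorem statement0_general
    (D0 D1 : Type*) [DivisionRing D0] [DivisionRing D1]
    (M : Type*) [AddCommGroup M] [Module D0 M] [Module D1ᵐᵒᵖ M]
    [SMulCommClass D0 D1ᵐᵒᵖ M]
    (m : ℕ) (hm : 2 ≤ m)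
    (φ : Module.Basis (Fin m) D1ᵐᵒᵖ M)
    (v : M) (g : M →ₗ[D1ᵐᵒᵖ] D1)
    -- `v ⊗ g` lies in the `D0`-subbimodule generated by `Σ_l φ_l ⊗ φ_l*`,
    -- i.e. `v ⊗ g = c • (Σ_l φ_l ⊗ φ_l*)` for some `c ∈ D0`, written in coordinates:
    (h : ∃ c : D0, ∀ (p : Fin m) (x : M),
      (φ.coord p v).unop * g x
        = ∑ l : Fin m, (φ.coord p (c • φ l)).unop * (φ.coord l x).unop) :
    v = 0 ∨ g = 0 := by
  obtain ⟨c, h⟩ := h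
  have hcφ := φ.eq_op_smul_of_coord_mul_eq_sum h
  obtain rfl | hc := eq_or_ne c 0
  · refine or_iff_not_imp_right.mpr fun hg => ?_
    obtain ⟨q, hq⟩ : ∃ q, g (φ q) ≠ 0 := not_forall.mp fun hq => hg (φ.ext hq)
    simpa [hq] using (hcφ q).symm
  · have hline : ∀ w : M, ∃ a : D1ᵐᵒᵖ, a • v = w := fun w => by
      rw [← mem_span_singleton, ← smul_inv_smul₀ hc w]
      exact φ.smul_mem_span_singleton (fun q => mem_span_singleton.mpr ⟨_, (hcφ q).symm⟩) _
    have hrank := finrank_le_one v hline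
    rw [finrank_eq_card_basis φ, Fintype.card_fin] at hrank
    omega

theorem statement0
    (k : Type*) [Field k]
    (D0 D1 : Type*) [DivisionRing D0] [DivisionRing D1]
    [Algebra k D0] [Algebra k D1]
    (M : Type*) [AddCommGroup M] [Module D0 M] [Module D1ᵐᵒᵖ M]
    [SMulCommClass D0 D1ᵐᵒᵖ M]
    -- `M` is `k`-central: the two induced `k`-actions coincide
    (hcentral : ∀ (α : k) (x : M),
      (algebraMap k D0 α) • x = (MulOpposite.op (algebraMap k D1 α)) • x)
    -- left dimension `n`, right dimension `m ≥ 2`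
    (n : ℕ) [FiniteDimensional D0 M] (hn : Module.finrank D0 M = n)
    (m : ℕ) (hm : 2 ≤ m)
    (φ : Module.Basis (Fin m) D1ᵐᵒᵖ M)
    (v : M) (g : M →ₗ[D1ᵐᵒᵖ] D1)
    -- `v ⊗ g` lies in the `D0`-subbimodule generated by `Σ_l φ_l ⊗ φ_l*`,
    -- i.e. `v ⊗ g = c • (Σ_l φ_l ⊗ φ_l*)` for some `c ∈ D0`, written in coordinates:
    (h : ∃ c : D0, ∀ (p : Fin m) (x : M),
      (φ.coord p v).unop * g x
        = ∑ l : Fin m, (φ.coord p (c • φ l)).unop * (φ.coord l x).unop) :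
    v = 0 ∨ g = 0 :=
  statement0_general D0 D1 M m hm φ v g h
end

section
/- Let (L_i) be a sequence in a k-linear abelian category satisfying: each End(L_i) is a division ring; Hom(L_i, L_{i-1}) = 0 = Ext^1(L_i, L_{i-1}); and for each i there is a short exact sequence 0 → L_i → L_{i+1}^{l_i} → L_{i+2} → 0 (the Euler sequences), with l_i = dim_{D_{i+1}} Hom(L_i, L_{i+1}) finite. Then Hom(L_i, L_j) = 0 for all j < i. -/
/-!
Induction on `i - j`. The case `j = i - 1` is the hypothesis `Hom(L i, L (i-1)) = 0`. For the
step, the Euler sequence ending in `L (m+2)` makes `L (m+2)` a quotient of `L (m+1)^{l m}`, so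
`Hom(L (m+2), L j)` embeds into `Hom(L (m+1), L j)^{l m}`, which vanishes by induction.
-/

open CategoryTheory CategoryTheory.Limits

attribute [local instance] CategoryTheory.Limits.HasFiniteBiproducts.of_hasFiniteProducts

theorem eq_zero_of_epi_from_biproduct {C : Type*} [Category C] [HasZeroMorphisms C]
    {ι : Type*} {F : ι → C} [HasBiproduct F] {Y Z : C} (v : ⨁ F ⟶ Z) [Epi v]
    (hF : ∀ b (g : F b ⟶ Y), g = 0) (f : Z ⟶ Y) : f = 0 := by
  have hvf : v ≫ f = 0 := biproduct.hom_ext' _ _ fun b => by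
    rw [comp_zero, ← Category.assoc]
    exact hF b _
  rw [← cancel_epi v, hvf, comp_zero]

theorem statement15_general
    (C : Type*) [Category C] [Abelian C]
    (L : ℤ → C)
    -- `Hom(L i, L (i-1)) = 0`
    (hhom : ∀ i (f : L i ⟶ L (i - 1)), f = 0)
    (l : ℤ → ℕ)
    (v : ∀ i, (⨁ fun (_ : Fin (l i)) => L (i + 1)) ⟶ L (i + 2))
    (hepi : ∀ i, Epi (v i)) :
    ∀ i j : ℤ, j < i → ∀ f : L i ⟶ L j, f = 0 := by
  intro i j hij
  induction i, hij using Int.leInduction with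
  | base =>
    have h := hhom (j + 1)
    rwa [add_sub_cancel_right] at h
  | succ n _ ih =>
    obtain ⟨m, rfl⟩ : ∃ m, n = m + 1 := ⟨n - 1, by ring⟩
    rw [add_assoc, one_add_one_eq_two]
    have := hepi m
    exact eq_zero_of_epi_from_biproduct (v m) fun _ => ih

theorem statement15
    (k : Type*) [Field k]
    (C : Type*) [Category C] [Abelian C] [Linear k C]
    (L : ℤ → C)
    -- each `End (L i)` is a division ring
    (hdiv : ∀ i (f : End (L i)), f ≠ 0 → IsUnit f)
    -- `Hom(L i, L (i-1)) = 0`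
    (hhom : ∀ i (f : L i ⟶ L (i - 1)), f = 0)
    -- `Ext^1(L i, L (i-1)) = 0`: every extension of `L i` by `L (i-1)` splits
    (hext : ∀ i (E : C) (u : L (i - 1) ⟶ E) (v : E ⟶ L i) (w : u ≫ v = 0),
      Mono u → Epi v → (ShortComplex.mk u v w).Exact →
      ∃ s : L i ⟶ E, s ≫ v = 𝟙 (L i))
    -- `l i` is the (finite) left dimension of `Hom(L i, L (i+1))` over `D (i+1)`
    (l : ℤ → ℕ)
    (hfin : ∀ i, Module.Finite (End (L (i + 1))) (L i ⟶ L (i + 1)))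
    (hl : ∀ i, l i = Module.finrank (End (L (i + 1))) (L i ⟶ L (i + 1)))
    -- the Euler short exact sequences `0 → L i → (L (i+1))^{l i} → L (i+2) → 0`
    (u : ∀ i, L i ⟶ ⨁ fun (_ : Fin (l i)) => L (i + 1))
    (v : ∀ i, (⨁ fun (_ : Fin (l i)) => L (i + 1)) ⟶ L (i + 2))
    (hw : ∀ i, u i ≫ v i = 0)
    (hmono : ∀ i, Mono (u i)) (hepi : ∀ i, Epi (v i))
    (hexact : ∀ i, (ShortComplex.mk (u i) (v i) (hw i)).Exact) :
    ∀ i j : ℤ, j < i → ∀ f : L i ⟶ L j, f = 0 :=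
  statement15_general C L hhom l v hepi
end

section
/- With the same hypotheses as the previous statement, the dimensions l_i = dim_{D_{i+1}} Hom(L_i, L_{i+1}) (left) and r_i = dim_{D_i} Hom(L_i, L_{i+1}) (right) are nonzero for all i. -/
/-!
If `l i = 0`, the Euler sequence makes `L (i + 2)` a quotient of the zero object, and then
`L (i + 1)` embeds in a sum of copies of `L (i + 2) = 0`. If `r i = 0`, then
`Hom(L i, L (i + 1)) = 0`, so the monomorphism `L i ⟶ L (i + 1) ^ l i` vanishes and `L i = 0`.
Either way the endomorphism ring of the object concerned is the zero ring, over which every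
finrank is `1` (Mathlib's convention), contradicting the dimension being `0`.
-/

open CategoryTheory CategoryTheory.Limits

attribute [local instance] CategoryTheory.Limits.HasFiniteBiproducts.of_hasFiniteProducts

/-- The right `End X`-module structure (i.e. left `(End X)ᵐᵒᵖ`-module structure) on
`X ⟶ Y`, given by precomposition. -/
instance endMopModule {C : Type*} [Category C] [Preadditive C] (X Y : C) :
    Module (End X)ᵐᵒᵖ (X ⟶ Y) where
  smul a f := a.unop ≫ f
  one_smul f := Category.id_comp f
  mul_smul a b f := by
    show ((a * b).unop) ≫ f = a.unop ≫ (b.unop ≫ f)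
    rw [← Category.assoc]
    rfl
  smul_zero a := Limits.comp_zero
  smul_add a f g := Preadditive.comp_add _ _ _ _ _ _
  add_smul a b f := Preadditive.add_comp _ _ _ _ _ _
  zero_smul f := Limits.zero_comp

theorem Module.finrank_eq_one_of_subsingleton_ring {R M : Type*} [Ring R] [Subsingleton R]
    [AddCommGroup M] [Module R M] : Module.finrank R M = 1 := by
  simp [Module.finrank, rank_subsingleton]

theorem Module.subsingleton_of_finrank_eq_zero {R M : Type*} [Ring R] [AddCommGroup M]
    [Module R M] [Module.Finite R M] (hR : ∀ r : R, r ≠ 0 → IsUnit r)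
    (h : Module.finrank R M = 0) : Subsingleton M := by
  cases subsingleton_or_nontrivial R
  · exact Module.subsingleton R M
  · let _ : DivisionRing R :=
      DivisionRing.ofIsUnitOrEqZero fun r => or_iff_not_imp_right.mpr (hR r)
    exact Module.finrank_zero_iff.mp h

namespace CategoryTheory.Limits

variable {C : Type*} [Category C] [HasZeroMorphisms C] {J : Type*} {f : J → C} [HasBiproduct f]

theorem isZero_biproduct_of_isEmpty [IsEmpty J] : IsZero (⨁ f) :=
  (IsZero.iff_id_eq_zero _).mpr <| biproduct.hom_ext _ _ fun j => isEmptyElim j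

theorem IsZero.of_mono_biproduct {X : C} (u : X ⟶ ⨁ f) [Mono u]
    (h : ∀ j, Subsingleton (X ⟶ f j)) : IsZero X :=
  IsZero.of_mono_eq_zero u <| biproduct.hom_ext _ _ fun j => (h j).elim _ _

end CategoryTheory.Limits

theorem statement16_general
    (C : Type*) [Category C] [Abelian C]
    (L : ℤ → C)
    (hdiv : ∀ i (f : End (L i)), f ≠ 0 → IsUnit f)
    (l : ℤ → ℕ)
    (hfinr : ∀ i, Module.Finite (End (L i))ᵐᵒᵖ (L i ⟶ L (i + 1)))
    (hl : ∀ i, l i = Module.finrank (End (L (i + 1))) (L i ⟶ L (i + 1)))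
    (u : ∀ i, L i ⟶ ⨁ fun (_ : Fin (l i)) => L (i + 1))
    (v : ∀ i, (⨁ fun (_ : Fin (l i)) => L (i + 1)) ⟶ L (i + 2))
    (hmono : ∀ i, Mono (u i)) (hepi : ∀ i, Epi (v i)) :
    ∀ i : ℤ, l i ≠ 0 ∧ Module.finrank (End (L i))ᵐᵒᵖ (L i ⟶ L (i + 1)) ≠ 0 := by
  intro i
  constructor
  · intro hli
    have : IsEmpty (Fin (l i)) := by rw [hli]; infer_instance
    have hz2 : IsZero (L (i + 1 + 1)) := by
      rw [add_assoc]
      exact isZero_biproduct_of_isEmpty.of_epi (v i)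
    have hz1 : IsZero (L (i + 1)) :=
      IsZero.of_mono_biproduct (u (i + 1)) fun _ => ⟨hz2.eq_of_tgt⟩
    have : Subsingleton (End (L (i + 1))) := ⟨hz1.eq_of_src⟩
    rw [hl, Module.finrank_eq_one_of_subsingleton_ring] at hli
    exact one_ne_zero hli
  · intro hr
    have hunit : ∀ f : (End (L i))ᵐᵒᵖ, f ≠ 0 → IsUnit f := fun f hf =>
      MulOpposite.op_unop f ▸ (hdiv i f.unop ((MulOpposite.unop_ne_zero_iff f).mpr hf)).op
    have hhom : Subsingleton (L i ⟶ L (i + 1)) :=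
      Module.subsingleton_of_finrank_eq_zero hunit hr
    have hz : IsZero (L i) := IsZero.of_mono_biproduct (u i) fun _ => hhom
    have : Subsingleton (End (L i)) := ⟨hz.eq_of_src⟩
    rw [Module.finrank_eq_one_of_subsingleton_ring] at hr
    exact one_ne_zero hr

theorem statement16
    (k : Type*) [Field k]
    (C : Type*) [Category C] [Abelian C] [Linear k C]
    (L : ℤ → C)
    (hdiv : ∀ i (f : End (L i)), f ≠ 0 → IsUnit f)
    (hhom : ∀ i (f : L i ⟶ L (i - 1)), f = 0)
    (hext : ∀ i (E : C) (u : L (i - 1) ⟶ E) (v : E ⟶ L i) (w : u ≫ v = 0),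
      Mono u → Epi v → (ShortComplex.mk u v w).Exact →
      ∃ s : L i ⟶ E, s ≫ v = 𝟙 (L i))
    (l : ℤ → ℕ)
    (hfinl : ∀ i, Module.Finite (End (L (i + 1))) (L i ⟶ L (i + 1)))
    (hfinr : ∀ i, Module.Finite (End (L i))ᵐᵒᵖ (L i ⟶ L (i + 1)))
    (hl : ∀ i, l i = Module.finrank (End (L (i + 1))) (L i ⟶ L (i + 1)))
    (u : ∀ i, L i ⟶ ⨁ fun (_ : Fin (l i)) => L (i + 1))
    (v : ∀ i, (⨁ fun (_ : Fin (l i)) => L (i + 1)) ⟶ L (i + 2))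
    (hw : ∀ i, u i ≫ v i = 0)
    (hmono : ∀ i, Mono (u i)) (hepi : ∀ i, Epi (v i))
    (hexact : ∀ i, (ShortComplex.mk (u i) (v i) (hw i)).Exact) :
    ∀ i : ℤ, l i ≠ 0 ∧ Module.finrank (End (L i))ᵐᵒᵖ (L i ⟶ L (i + 1)) ≠ 0 :=
  statement16_general C L hdiv l hfinr hl u v hmono hepi
end

section
/- Let (L_i) be a linear sequence (satisfying properties (1)–(5): End(L_i) = D_i division rings over k; Hom(L_i,L_{i-1}) = 0 = Ext^1(L_i,L_{i-1}); Hom(L_i,L_{i+1}) finite-dimensional on both sides; Euler exact sequences 0 → L_i → *Hom(L_i,L_{i+1}) ⊗_{D_{i+1}} L_{i+1} → L_{i+2} → 0; the induced maps Φ_i: D_i → D_{i+2} are isomorphisms). Then for each i, applying Hom(L_{i+1}, −) to the i-th Euler sequence yields a bimodule isomorphism Ψ_i: *Hom(L_i, L_{i+1}) → Hom(L_{i+1}, L_{i+2}), where the D_i–D_{i+1}-structure on the target is via Φ_i. -/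
/-!
Applying `Hom(Y, -)` to `0 → X → Y^n → Z → 0` gives the exact sequence
`0 → Hom(Y, X) → Hom(Y, Y^n) → Hom(Y, Z) → Ext¹(Y, X)`, whose outer terms vanish for a linear
sequence. A left `End Y`-linear form `ξ` on `Hom(X, Y)` is determined by its values on the basis
`u ≫ π_p`, i.e. by the morphism `Y ⟶ Y^n` with components `ξ(u ≫ π_p)`, so `Ψ` is a composite
of two bijections. Left `End X`-equivariance holds because `ξ(u ≫ h) = (ξ(u ≫ π_q))_q ≫ h` for
every `h : Y^n ⟶ Y`, which moves the lift of `c ∈ End X` across `u` to `Y^n` and then across `v`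
to `Z`.
-/

open CategoryTheory CategoryTheory.Limits

attribute [local instance] CategoryTheory.Limits.HasFiniteBiproducts.of_hasFiniteProducts

/-- Precomposition by `c ∈ End X`, as an `End Y`-linear endomap of `X ⟶ Y`
(the right `End X`-action on `Hom(X, Y)`). -/
def precompL {C : Type*} [Category C] [Preadditive C] {X Y : C} (c : End X) :
    (X ⟶ Y) →ₗ[End Y] (X ⟶ Y) where
  toFun h := (c : X ⟶ X) ≫ h
  map_add' h h' := Preadditive.comp_add _ _ _ _ _ _
  map_smul' d h := by
    show c ≫ (h ≫ d) = (c ≫ h) ≫ d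
    rw [Category.assoc]

/-- The map `Ψ : *Hom(X, Y) → Hom(Y, Z)` obtained by applying `Hom(Y, −)` to an Euler
sequence `0 → X --u--> Y^n --v--> Z → 0`: `Ψ(ξ)` has components `ξ(u ≫ π_p)`. -/
noncomputable def eulerPsi {C : Type*} [Category C] [Abelian C] {X Y Z : C} {n : ℕ}
    (u : X ⟶ ⨁ fun (_ : Fin n) => Y) (v : (⨁ fun (_ : Fin n) => Y) ⟶ Z)
    (ξ : (X ⟶ Y) →ₗ[End Y] End Y) : Y ⟶ Z :=
  biproduct.lift (fun p => (ξ (u ≫ biproduct.π (fun (_ : Fin n) => Y) p) : Y ⟶ Y)) ≫ v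


section Extensions

variable {C : Type*} [Category C] [Abelian C] {X B Y Z : C}

/-- Pull the sequence back along `g` and split the resulting extension of `Y` by `X`. -/
lemma exists_comp_eq_of_extensions_split (u : X ⟶ B) (v : B ⟶ Z) (w : u ≫ v = 0)
    [Mono u] [Epi v] (hex : (ShortComplex.mk u v w).Exact)
    (hsplit : ∀ (E : C) (f : X ⟶ E) (g : E ⟶ Y) (w : f ≫ g = 0),
      Mono f → Epi g → (ShortComplex.mk f g w).Exact → ∃ s : Y ⟶ E, s ≫ g = 𝟙 Y)
    (g : Y ⟶ Z) : ∃ t : Y ⟶ B, t ≫ v = g := by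
  obtain ⟨f, hf_fst, hf_snd⟩ : ∃ f : X ⟶ pullback v g,
      f ≫ pullback.fst v g = u ∧ f ≫ pullback.snd v g = 0 :=
    ⟨pullback.lift u 0 (by simp [w]), pullback.lift_fst _ _ _, pullback.lift_snd _ _ _⟩
  have : Mono f := mono_of_mono_fac hf_fst
  have hexP : (ShortComplex.mk f (pullback.snd v g) hf_snd).Exact := by
    refine ShortComplex.exact_of_f_is_kernel _
      (KernelFork.IsLimit.ofι' f hf_snd fun {A} t ht => ?_)
    obtain ⟨s, hs⟩ := KernelFork.IsLimit.lift' hex.fIsKernel (t ≫ pullback.fst v g) (by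
      rw [Category.assoc, pullback.condition, ← Category.assoc, ht, zero_comp])
    refine ⟨s, pullback.hom_ext ?_ ?_⟩
    · rw [Category.assoc, hf_fst]; exact hs
    · rw [Category.assoc, hf_snd, comp_zero, ht]
  obtain ⟨s, hs⟩ := hsplit _ f _ hf_snd inferInstance inferInstance hexP
  refine ⟨s ≫ pullback.fst v g, ?_⟩
  rw [Category.assoc, pullback.condition, ← Category.assoc, hs, Category.id_comp]

lemma eq_of_comp_eq_of_exact (u : X ⟶ B) (v : B ⟶ Z) (w : u ≫ v = 0) [Mono u]
    (hex : (ShortComplex.mk u v w).Exact) (hYX : ∀ f : Y ⟶ X, f = 0) {t t' : Y ⟶ B}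
    (h : t ≫ v = t' ≫ v) : t = t' := by
  obtain ⟨s, hs⟩ := KernelFork.IsLimit.lift' hex.fIsKernel (t - t')
    (by rw [Preadditive.sub_comp, h, sub_self])
  rw [← sub_eq_zero, ← hs, hYX s, zero_comp]

end Extensions

lemma span_range_eq_top_of_card_eq_finrank {R M ι : Type*} [Ring R] [AddCommGroup M]
    [Module R M] [Module.Finite R M] [Fintype ι]
    (hR : ∀ a : R, a ≠ 0 → IsUnit a) {b : ι → M} (hb : LinearIndependent R b)
    (hcard : Fintype.card ι = Module.finrank R M) :
    Submodule.span R (Set.range b) = ⊤ := by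
  rcases subsingleton_or_nontrivial R with hR₀ | hR₀
  · have := Module.subsingleton R M
    exact Subsingleton.elim _ _
  · let _ : DivisionRing R :=
      DivisionRing.ofIsUnitOrEqZero fun a => (em (a = 0)).symm.imp_left (hR a)
    exact hb.span_eq_top_of_card_eq_finrank' hcard

section EulerPsi

variable {C : Type*} [Category C] [Abelian C] {X Y Z : C} {n : ℕ}
  (u : X ⟶ ⨁ fun (_ : Fin n) => Y) (v : (⨁ fun (_ : Fin n) => Y) ⟶ Z)

lemma apply_comp_eq_lift_comp (ξ : (X ⟶ Y) →ₗ[End Y] End Y)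
    (h : (⨁ fun (_ : Fin n) => Y) ⟶ Y) :
    (ξ (u ≫ h) : Y ⟶ Y) =
      biproduct.lift (fun q => (ξ (u ≫ biproduct.π (fun _ => Y) q) : Y ⟶ Y)) ≫ h := by
  have hu : u ≫ h = ∑ q, End.of (biproduct.ι (fun _ => Y) q ≫ h) •
      (u ≫ biproduct.π (fun _ => Y) q) := by
    conv_lhs => rw [← Category.id_comp h, ← biproduct.total, Preadditive.sum_comp,
      Preadditive.comp_sum]
    simp only [End.smul_right, End.of, Category.assoc]
  rw [hu, map_sum, biproduct.lift_eq, Preadditive.sum_comp]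
  refine Finset.sum_congr rfl fun q _ => ?_
  rw [map_smul, smul_eq_mul, End.mul_def, Category.assoc]

lemma eulerPsi_add (ξ ζ : (X ⟶ Y) →ₗ[End Y] End Y) :
    eulerPsi u v (ξ + ζ) = eulerPsi u v ξ + eulerPsi u v ζ := by
  simp only [eulerPsi, ← Preadditive.add_comp]
  congr 1
  ext p
  simp [Preadditive.add_comp]

lemma eulerPsi_toSpanSingleton_comp (b : End Y) (ξ : (X ⟶ Y) →ₗ[End Y] End Y) :
    eulerPsi u v ((LinearMap.toSpanSingleton (End Y) (End Y) b).comp ξ)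
      = (b : Y ⟶ Y) ≫ eulerPsi u v ξ := by
  simp only [eulerPsi, ← Category.assoc]
  congr 1
  ext p
  simp [End.mul_def]

lemma eulerPsi_comp_precompL {c : End X} {fc : (⨁ fun (_ : Fin n) => Y) ⟶ ⨁ fun _ => Y}
    {φ : End Z} (hu : (c : X ⟶ X) ≫ u = u ≫ fc) (hv : fc ≫ v = v ≫ (φ : Z ⟶ Z))
    (ξ : (X ⟶ Y) →ₗ[End Y] End Y) :
    eulerPsi u v (ξ.comp (precompL c)) = eulerPsi u v ξ ≫ (φ : Z ⟶ Z) := by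
  have hlift : biproduct.lift (fun p => ((ξ.comp (precompL c)) (u ≫ biproduct.π _ p) : Y ⟶ Y))
      = biproduct.lift (fun q => (ξ (u ≫ biproduct.π (fun _ => Y) q) : Y ⟶ Y)) ≫ fc := by
    ext p
    rw [biproduct.lift_π, LinearMap.comp_apply]
    change (ξ ((c : X ⟶ X) ≫ u ≫ _) : Y ⟶ Y) = _
    rw [← Category.assoc, hu, Category.assoc, apply_comp_eq_lift_comp, Category.assoc]
  rw [eulerPsi, hlift, Category.assoc, hv, eulerPsi, Category.assoc]

variable {u v}

lemma eulerPsi_injective (w : u ≫ v = 0) [Mono u] (hex : (ShortComplex.mk u v w).Exact)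
    (hYX : ∀ f : Y ⟶ X, f = 0)
    (hspan : Submodule.span (End Y) (Set.range fun p => u ≫ biproduct.π (fun _ => Y) p) = ⊤) :
    Function.Injective (eulerPsi u v) := by
  intro ξ ζ h
  have hlift := eq_of_comp_eq_of_exact u v w hex hYX h
  refine LinearMap.ext_on_range hspan fun p => ?_
  simpa using congrArg (· ≫ biproduct.π (fun _ => Y) p) hlift

lemma eulerPsi_surjective (w : u ≫ v = 0) [Mono u] [Epi v]
    (hex : (ShortComplex.mk u v w).Exact)
    (hsplit : ∀ (E : C) (f : X ⟶ E) (g : E ⟶ Y) (w : f ≫ g = 0),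
      Mono f → Epi g → (ShortComplex.mk f g w).Exact → ∃ s : Y ⟶ E, s ≫ g = 𝟙 Y)
    (hindep : LinearIndependent (End Y) fun p => u ≫ biproduct.π (fun _ => Y) p)
    (hspan : Submodule.span (End Y) (Set.range fun p => u ≫ biproduct.π (fun _ => Y) p) = ⊤) :
    Function.Surjective (eulerPsi u v) := by
  intro g
  obtain ⟨t, rfl⟩ := exists_comp_eq_of_extensions_split u v w hex hsplit g
  let b := Module.Basis.mk hindep hspan.ge
  refine ⟨b.constr ℕ fun p => (t ≫ biproduct.π (fun _ => Y) p : End Y), ?_⟩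
  rw [eulerPsi]
  congr 1
  ext p
  rw [biproduct.lift_π, ← Module.Basis.mk_apply hindep hspan.ge, b.constr_basis]

end EulerPsi

theorem statement17_general
    (C : Type*) [Category C] [Abelian C]
    (L : ℤ → C)
    -- (1) each `End (L i)` is a division ring
    (hdiv : ∀ i (f : End (L i)), f ≠ 0 → IsUnit f)
    -- (2) `Hom(L i, L (i-1)) = 0 = Ext^1(L i, L (i-1))`
    (hhom : ∀ i (f : L i ⟶ L (i - 1)), f = 0)
    (hext : ∀ i (E : C) (f : L (i - 1) ⟶ E) (g : E ⟶ L i) (w : f ≫ g = 0),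
      Mono f → Epi g → (ShortComplex.mk f g w).Exact →
      ∃ s : L i ⟶ E, s ≫ g = 𝟙 (L i))
    -- (3) `Hom(L i, L (i+1))` finite-dimensional on both sides
    (hfinl : ∀ i, Module.Finite (End (L (i + 1))) (L i ⟶ L (i + 1)))
    (l : ℤ → ℕ)
    (hl : ∀ i, l i = Module.finrank (End (L (i + 1))) (L i ⟶ L (i + 1)))
    -- (4) the Euler short exact sequences, with left linearly independent components
    (u : ∀ i, L i ⟶ ⨁ fun (_ : Fin (l i)) => L (i + 1))
    (v : ∀ i, (⨁ fun (_ : Fin (l i)) => L (i + 1)) ⟶ L (i + 2))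
    (hw : ∀ i, u i ≫ v i = 0)
    (hmono : ∀ i, Mono (u i)) (hepi : ∀ i, Epi (v i))
    (hexact : ∀ i, (ShortComplex.mk (u i) (v i) (hw i)).Exact)
    (hindep : ∀ i, LinearIndependent (End (L (i + 1)))
      (fun p : Fin (l i) => u i ≫ biproduct.π (fun _ => L (i + 1)) p))
    -- (5) the canonical maps `Φ_i : D i → D (i+2)` are isomorphisms
    (hPhi : ∀ i, ∃ Φ : End (L i) ≃+* End (L (i + 2)),
      ∀ a : End (L i), ∃ fa : (⨁ fun (_ : Fin (l i)) => L (i + 1)) ⟶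
          (⨁ fun (_ : Fin (l i)) => L (i + 1)),
        (a : L i ⟶ L i) ≫ u i = u i ≫ fa ∧
        fa ≫ v i = v i ≫ (Φ a : L (i + 2) ⟶ L (i + 2))) :
    ∀ i : ℤ,
      (∀ ξ ζ, eulerPsi (u i) (v i) (ξ + ζ)
        = eulerPsi (u i) (v i) ξ + eulerPsi (u i) (v i) ζ) ∧
      Function.Bijective (eulerPsi (u i) (v i)) ∧
      (∀ (b : End (L (i + 1))) ξ,
        eulerPsi (u i) (v i)
            ((LinearMap.toSpanSingleton (End (L (i + 1))) (End (L (i + 1))) b).comp ξ)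
          = (b : L (i + 1) ⟶ L (i + 1)) ≫ eulerPsi (u i) (v i) ξ) ∧
      (∃ Φ : End (L i) →+* End (L (i + 2)), ∀ (c : End (L i)) ξ,
        eulerPsi (u i) (v i) (ξ.comp (precompL c))
          = eulerPsi (u i) (v i) ξ ≫ (Φ c : L (i + 2) ⟶ L (i + 2))) := by
  intro i
  have hYX := hhom (i + 1)
  have hsplit := hext (i + 1)
  rw [add_sub_cancel_right] at hYX hsplit
  have hspan := span_range_eq_top_of_card_eq_finrank (M := L i ⟶ L (i + 1)) (hdiv (i + 1))
    (hindep i) ((Fintype.card_fin _).trans (hl i))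
  obtain ⟨Φ, hΦ⟩ := hPhi i
  refine ⟨eulerPsi_add _ _, ⟨eulerPsi_injective (hw i) (hexact i) hYX hspan,
    eulerPsi_surjective (hw i) (hexact i) hsplit (hindep i) hspan⟩,
    eulerPsi_toSpanSingleton_comp _ _, Φ, fun c ξ => ?_⟩
  obtain ⟨fc, hu, hv⟩ := hΦ c
  exact eulerPsi_comp_precompL _ _ hu hv ξ

theorem statement17
    (k : Type*) [Field k]
    (C : Type*) [Category C] [Abelian C] [Linear k C]
    (L : ℤ → C)
    -- (1) each `End (L i)` is a division ring
    (hdiv : ∀ i (f : End (L i)), f ≠ 0 → IsUnit f)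
    -- (2) `Hom(L i, L (i-1)) = 0 = Ext^1(L i, L (i-1))`
    (hhom : ∀ i (f : L i ⟶ L (i - 1)), f = 0)
    (hext : ∀ i (E : C) (f : L (i - 1) ⟶ E) (g : E ⟶ L i) (w : f ≫ g = 0),
      Mono f → Epi g → (ShortComplex.mk f g w).Exact →
      ∃ s : L i ⟶ E, s ≫ g = 𝟙 (L i))
    -- (3) `Hom(L i, L (i+1))` finite-dimensional on both sides
    (hfinl : ∀ i, Module.Finite (End (L (i + 1))) (L i ⟶ L (i + 1)))
    (hfinr : ∀ i, Module.Finite (End (L i))ᵐᵒᵖ (L i ⟶ L (i + 1)))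
    (l : ℤ → ℕ)
    (hl : ∀ i, l i = Module.finrank (End (L (i + 1))) (L i ⟶ L (i + 1)))
    -- (4) the Euler short exact sequences, with left linearly independent components
    (u : ∀ i, L i ⟶ ⨁ fun (_ : Fin (l i)) => L (i + 1))
    (v : ∀ i, (⨁ fun (_ : Fin (l i)) => L (i + 1)) ⟶ L (i + 2))
    (hw : ∀ i, u i ≫ v i = 0)
    (hmono : ∀ i, Mono (u i)) (hepi : ∀ i, Epi (v i))
    (hexact : ∀ i, (ShortComplex.mk (u i) (v i) (hw i)).Exact)
    (hindep : ∀ i, LinearIndependent (End (L (i + 1)))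
      (fun p : Fin (l i) => u i ≫ biproduct.π (fun _ => L (i + 1)) p))
    -- (5) the canonical maps `Φ_i : D i → D (i+2)` are isomorphisms
    (hPhi : ∀ i, ∃ Φ : End (L i) ≃+* End (L (i + 2)),
      ∀ a : End (L i), ∃ fa : (⨁ fun (_ : Fin (l i)) => L (i + 1)) ⟶
          (⨁ fun (_ : Fin (l i)) => L (i + 1)),
        (a : L i ⟶ L i) ≫ u i = u i ≫ fa ∧
        fa ≫ v i = v i ≫ (Φ a : L (i + 2) ⟶ L (i + 2))) :
    ∀ i : ℤ,
      (∀ ξ ζ, eulerPsi (u i) (v i) (ξ + ζ)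
        = eulerPsi (u i) (v i) ξ + eulerPsi (u i) (v i) ζ) ∧
      Function.Bijective (eulerPsi (u i) (v i)) ∧
      (∀ (b : End (L (i + 1))) ξ,
        eulerPsi (u i) (v i)
            ((LinearMap.toSpanSingleton (End (L (i + 1))) (End (L (i + 1))) b).comp ξ)
          = (b : L (i + 1) ⟶ L (i + 1)) ≫ eulerPsi (u i) (v i) ξ) ∧
      (∃ Φ : End (L i) →+* End (L (i + 2)), ∀ (c : End (L i)) ξ,
        eulerPsi (u i) (v i) (ξ.comp (precompL c))
          = eulerPsi (u i) (v i) ξ ≫ (Φ c : L (i + 2) ⟶ L (i + 2))) :=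
  statement17_general C L hdiv hhom hext hfinl l hl u v hw hmono hepi hexact hindep hPhi
end
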